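/- Let G and H be loopless weakly connected digraphs, α, β : G → H homomorphisms, q ∈ V(G), and let Q be a walk from α(q) to β(q) that is \bar H-realizable for α, β, q. Then Q is H-realizable for α, β, q if and only if Q is orientation compatible, i.e., for every vertex v ∈ V(G) and every walk W_v from q to v in G, the reduced walk α(W_v)⁻¹ · Q · β(W_v) satisfies the zigzag condition for v. -/

import Mathlib

namespace HRecoloring

/-- A digraph: a vertex type together with an arc relation. -/
structure Dgraph (V : Type) where
  Adj : V → V → Prop

variable {V X : Type}

/-- Adjacency in the underlying undirected graph. -/
def Dgraph.UAdj (G : Dgraph V) (u v : V) : Prop := G.Adj u v ∨ G.Adj v u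

/-- A digraph is loopless if it has no arc `v → v`. -/
def Dgraph.Loopless (G : Dgraph V) : Prop := ∀ v, ¬ G.Adj v v

/-- A digraph is reflexive if `v → v` for every vertex `v`. -/
def Dgraph.IsReflexive (G : Dgraph V) : Prop := ∀ v, G.Adj v v

/-- A symmetric digraph, which we identify with an undirected graph. -/
def Dgraph.IsSymmetric (G : Dgraph V) : Prop := ∀ u v, G.Adj u v → G.Adj v u

/-- The underlying undirected graph, as a symmetric digraph. -/
def Dgraph.usym (G : Dgraph V) : Dgraph V := ⟨fun u v => G.UAdj u v⟩

/-- A (di)graph homomorphism. -/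
def IsHom (G : Dgraph V) (H : Dgraph X) (f : V → X) : Prop :=
  ∀ ⦃u v⦄, G.Adj u v → H.Adj (f u) (f v)

/-- A walk from `a` to `b`, encoded by its list of successive vertices.
A walk in a digraph is a walk in its underlying undirected graph. -/
def IsWalk (G : Dgraph V) (a b : V) (l : List V) : Prop :=
  l ≠ [] ∧ l.head? = some a ∧ l.getLast? = some b ∧ l.Chain' G.UAdj

/-- Weak connectivity. -/
def Dgraph.WConn (G : Dgraph V) : Prop := ∀ u v : V, ∃ l, IsWalk G u v l

/-- Concatenation of two walks sharing an endpoint. -/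
def wcomp (l₁ l₂ : List V) : List V := l₁ ++ l₂.tail

/-- Number of edges of a walk. -/
def wlen (l : List V) : ℕ := l.length - 1

/-- One reduction step on walks: delete a backtracking pair `(x y)(y x)` or a
one-edge loop step `(x x)`. -/
def RStep (l l' : List V) : Prop :=
  (∃ (p s : List V) (x y : V), l = p ++ [x, y, x] ++ s ∧ l' = p ++ [x] ++ s) ∨
  (∃ (p s : List V) (x : V), l = p ++ [x, x] ++ s ∧ l' = p ++ [x] ++ s)

/-- Equality of walks in the fundamental groupoid `π(H)`: the equivalence
generated by reduction steps (two walks are equal in `π(H)` iff they reduce to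
the same reduced walk). -/
def PiEq (l l' : List V) : Prop := Relation.EqvGen RStep l l'

/-- A walk is reduced if no reduction step applies to it. -/
def IsReduced (l : List V) : Prop := ∀ l', ¬ RStep l l'

/-- A closed walk is cyclically reduced if it is reduced and its first and last
edges are not inverses of each other. -/
def IsCycReduced (l : List V) : Prop :=
  IsReduced l ∧ ∃ h : 2 ≤ l.length,
    l.get ⟨1, by omega⟩ ≠ l.get ⟨l.length - 2, by omega⟩

/-- `n`-fold concatenation of a closed walk `R` based at `h`. -/
def witer (R : List V) (h : V) : ℕ → List V
  | 0 => [h]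
  | n + 1 => wcomp R (witer R h n)

/-- `Rⁿ` for an integer `n`, for a closed walk `R` based at `h`; for `n < 0`
this is the `|n|`-fold concatenation of the reversed walk `R⁻¹`. -/
def zpowWalk (R : List V) (h : V) (n : ℤ) : List V :=
  if 0 ≤ n then witer R h n.toNat else witer R.reverse h (-n).toNat

/-- A walk is symmetric if every edge it traverses is a symmetric arc. -/
def IsSymWalk (H : Dgraph X) (l : List X) : Prop :=
  l.Chain' fun a b => H.Adj a b ∧ H.Adj b a

/-- The conjugated walk `α(W)⁻¹ · Q · β(W)`. -/
def conj (α β : V → X) (Wl : List V) (Q : List X) : List X :=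
  wcomp (wcomp (Wl.map α).reverse Q) (Wl.map β)

/-- Topological validity of a walk `Q` from `α q` to `β q`:
`β(C) = Q⁻¹ · α(C) · Q` in `π(H)` for every closed walk `C` at `q`. -/
def TopValid (G : Dgraph V) (H : Dgraph X) (α β : V → X) (q : V) (Q : List X) : Prop :=
  ∀ C : List V, IsWalk G q q C →
    PiEq (C.map β) (wcomp (wcomp Q.reverse (C.map α)) Q)

/-- IN-zigzag pattern `a₁ ← a₂ → a₃ ← … ← a_{n-1} → a_n`. -/
def INCompatible (H : Dgraph X) (l : List X) : Prop :=
  ∀ (i : ℕ) (h : i + 1 < l.length),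
    if i % 2 = 0 then H.Adj (l.get ⟨i + 1, h⟩) (l.get ⟨i, by omega⟩)
    else H.Adj (l.get ⟨i, by omega⟩) (l.get ⟨i + 1, h⟩)

/-- OUT-zigzag pattern `a₁ → a₂ ← a₃ → … → a_{n-1} ← a_n`. -/
def OUTCompatible (H : Dgraph X) (l : List X) : Prop :=
  ∀ (i : ℕ) (h : i + 1 < l.length),
    if i % 2 = 0 then H.Adj (l.get ⟨i, by omega⟩) (l.get ⟨i + 1, h⟩)
    else H.Adj (l.get ⟨i + 1, h⟩) (l.get ⟨i, by omega⟩)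

/-- A vertex is of type IN if it has an in-neighbor. -/
def TypeIN (G : Dgraph V) (v : V) : Prop := ∃ u, G.Adj u v

/-- A vertex is of type OUT if it has an out-neighbor. -/
def TypeOUT (G : Dgraph V) (v : V) : Prop := ∃ u, G.Adj v u

/-- A vertex is of type SYM if it is of type IN and of type OUT. -/
def TypeSYM (G : Dgraph V) (v : V) : Prop := TypeIN G v ∧ TypeOUT G v

/-- The zigzag condition for the vertex `v`. -/
def Zigzag (G : Dgraph V) (H : Dgraph X) (v : V) (l : List X) : Prop :=
  (TypeIN G v → INCompatible H l) ∧ (TypeOUT G v → OUTCompatible H l)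

/-- A recoloring sequence: a nonempty sequence of homomorphisms in which
consecutive homomorphisms differ on exactly one vertex. -/
def IsRecolSeq (G : Dgraph V) (H : Dgraph X) (σs : List (V → X)) : Prop :=
  σs ≠ [] ∧ (∀ σ ∈ σs, IsHom G H σ) ∧ σs.Chain' fun σ σ' => ∃! u, σ u ≠ σ' u

/-- The monochromatic neighborhood property: whenever a vertex changes its
color, all of its neighbors (in the underlying undirected graph) have one
common color. -/
def MonoNbhd (G : Dgraph V) (σs : List (V → X)) : Prop :=
  σs.Chain' fun σ σ' => ∀ v, σ v ≠ σ' v → ∃ h, ∀ w, G.UAdj v w → σ w = h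

/-- `VWalk G v σs S`: `S` is the vertex walk `S(v)` of the recoloring sequence
`σs`; each color change of `v` from `a` to `b`, while all neighbors of `v` are
colored `h`, contributes the two edges `(a h)(h b)`. -/
inductive VWalk (G : Dgraph V) (v : V) : List (V → X) → List X → Prop
  | single (σ : V → X) : VWalk G v [σ] [σ v]
  | stay {σ σ' : V → X} {rest : List (V → X)} {l : List X} :
      σ v = σ' v → VWalk G v (σ' :: rest) l → VWalk G v (σ :: σ' :: rest) l
  | move {σ σ' : V → X} {rest : List (V → X)} {l : List X} (h : X) :
      σ v ≠ σ' v → (∀ w, G.UAdj v w → σ w = h) →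
      VWalk G v (σ' :: rest) l → VWalk G v (σ :: σ' :: rest) (σ v :: h :: l)

/-- `H`-realizability of a walk `Q` via recoloring sequences satisfying the
monochromatic neighborhood property: `Q = S(q)` in `π(H)`. -/
def MRealizable (G : Dgraph V) (H : Dgraph X) (α β : V → X) (q : V) (Q : List X) : Prop :=
  ∃ (σs : List (V → X)) (Sq : List X),
    IsRecolSeq G H σs ∧ σs.head? = some α ∧ σs.getLast? = some β ∧
    MonoNbhd G σs ∧ VWalk G q σs Sq ∧ PiEq Sq Q

/-- Orientation compatibility of a walk `Q`: every generated vertex walk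
satisfies the zigzag condition. -/
def OrientCompatible (G : Dgraph V) (H : Dgraph X) (α β : V → X) (q : V) (Q : List X) : Prop :=
  ∀ (v : V) (Wl : List V), IsWalk G q v Wl →
    ∀ S : List X, IsReduced S → PiEq (conj α β Wl Q) S → Zigzag G H v S

/-- Hom₁-adjacency: the homomorphisms differ on exactly one vertex and, for
every arc `x → y` of `G`, both `φ x → ψ y` and `ψ x → φ y` are arcs of `H`. -/
def Hom1Adj (G : Dgraph V) (H : Dgraph X) (φ ψ : V → X) : Prop :=
  (∃! u, φ u ≠ ψ u) ∧ ∀ ⦃x y⦄, G.Adj x y → H.Adj (φ x) (ψ y) ∧ H.Adj (ψ x) (φ y)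

/-- A recoloring sequence in the Hom₁ sense (digraphs). -/
def Hom1Seq (G : Dgraph V) (H : Dgraph X) (σs : List (V → X)) : Prop :=
  σs ≠ [] ∧ (∀ σ ∈ σs, IsHom G H σ) ∧ σs.Chain' (Hom1Adj G H)

/-- A recoloring sequence in which each step recolors exactly one vertex to an
adjacent color (the Hom₁ sense for reflexive undirected graphs). -/
def AdjRecolSeq (G : Dgraph V) (H : Dgraph X) (σs : List (V → X)) : Prop :=
  σs ≠ [] ∧ (∀ σ ∈ σs, IsHom G H σ) ∧
  σs.Chain' fun σ σ' => (∃! u, σ u ≠ σ' u) ∧ ∀ u, σ u ≠ σ' u → H.Adj (σ u) (σ' u)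

/-- The push-or-pull property: whenever a vertex changes its color from `a` to
`b`, every neighbor of that vertex has color `a` or `b`. -/
def PushOrPull (G : Dgraph V) (σs : List (V → X)) : Prop :=
  σs.Chain' fun σ σ' => ∀ u, σ u ≠ σ' u → ∀ w, G.UAdj u w → σ w = σ u ∨ σ w = σ' u

/-- The walk of successive colors of `v` along a recoloring sequence. -/
def colorWalk (σs : List (V → X)) (v : V) : List X := σs.map fun σ => σ v

/-- `H`-realizability via recoloring sequences (reflexive undirected Hom₁
sense) satisfying the push-or-pull property. -/
def PRealizable (G : Dgraph V) (H : Dgraph X) (α β : V → X) (q : V) (Q : List X) : Prop :=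
  ∃ σs : List (V → X), AdjRecolSeq G H σs ∧ σs.head? = some α ∧ σs.getLast? = some β ∧
    PushOrPull G σs ∧ PiEq (colorWalk σs q) Q

/-- `H`-realizability via Hom₁ recoloring sequences of digraphs satisfying the
push-or-pull property. -/
def DRealizable (G : Dgraph V) (H : Dgraph X) (α β : V → X) (q : V) (Q : List X) : Prop :=
  ∃ σs : List (V → X), Hom1Seq G H σs ∧ σs.head? = some α ∧ σs.getLast? = some β ∧
    PushOrPull G σs ∧ PiEq (colorWalk σs q) Q

/-- `H` contains no 4-cycle of algebraic girth 0 as a subgraph (neither of the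
two orientations of the 4-cycle with two forward and two backward arcs). -/
def NoZeroGirthC4 (H : Dgraph X) : Prop :=
  ∀ a b c d : X, a ≠ b → a ≠ c → a ≠ d → b ≠ c → b ≠ d → c ≠ d →
    ¬(H.Adj a b ∧ H.Adj b d ∧ H.Adj a c ∧ H.Adj c d) ∧
    ¬(H.Adj a b ∧ H.Adj d b ∧ H.Adj a c ∧ H.Adj d c)

/-- `H` contains no triangle of algebraic girth 1 as a subgraph. -/
def NoOneGirthTriangle (H : Dgraph X) : Prop :=
  ∀ x y z : X, x ≠ y → y ≠ z → x ≠ z → ¬(H.Adj x y ∧ H.Adj y z ∧ H.Adj x z)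

/-- A path in the reconfiguration graph `R_H(G)` from `α` to `β`. -/
def IsRPath (G : Dgraph V) (H : Dgraph X) (α β : V → X) (L : List (V → X)) : Prop :=
  L ≠ [] ∧ L.head? = some α ∧ L.getLast? = some β ∧
  (∀ σ ∈ L, IsHom G H σ) ∧ L.Chain' fun φ ψ => ∃! u, φ u ≠ ψ u

/-- A path in the graph `Hom₁(G, H)` from `α` to `β`. -/
def IsHom1Path (G : Dgraph V) (H : Dgraph X) (α β : V → X) (L : List (V → X)) : Prop :=
  L ≠ [] ∧ L.head? = some α ∧ L.getLast? = some β ∧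
  (∀ σ ∈ L, IsHom G H σ) ∧ L.Chain' (Hom1Adj G H)

/-- The set of reduced walks `Q` from `α q` to `β q` that generate symmetric
vertex walks on `V'` with the system of walks `Wf`. -/
def SymGenSet (H : Dgraph X) (α β : V → X) (q : V)
    (V' : Set V) (Wf : V → List V) : Set (List X) :=
  {Q | IsWalk H (α q) (β q) Q ∧ IsReduced Q ∧
    ∀ v ∈ V', ∀ S : List X, IsReduced S → PiEq (conj α β (Wf v) Q) S → IsSymWalk H S}

/-- The set of orientation-compatible walks for `q` and the system `Uf`. -/
def OCSet (G : Dgraph V) (H : Dgraph X) (α β : V → X) (q : V)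
    (Uf : V → List V) : Set (List X) :=
  {Q | IsWalk H (α q) (β q) Q ∧ IsReduced Q ∧ Even (wlen Q) ∧
    ∀ (v : V) (S : List X), IsReduced S → PiEq (conj α β (Uf v) Q) S → Zigzag G H v S}

/-- The set `Π_q` of walks from `α q` to `β q` that are `H`-realizable via
recoloring sequences satisfying the monochromatic neighborhood property. -/
def MRealSet (G : Dgraph V) (H : Dgraph X) (α β : V → X) (q : V) : Set (List X) :=
  {Q | IsWalk H (α q) (β q) Q ∧ IsReduced Q ∧ MRealizable G H α β q Q}

/-- The set of walks from `α q` to `β q` that are `H`-realizable via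
recoloring sequences satisfying the push-or-pull property. -/
def PRealSet (G : Dgraph V) (H : Dgraph X) (α β : V → X) (q : V) : Set (List X) :=
  {Q | IsWalk H (α q) (β q) Q ∧ IsReduced Q ∧ PRealizable G H α β q Q}

/-- Ceiling division on natural numbers. -/
def cdiv (a b : ℕ) : ℕ := (a + b - 1) / b

/-!
A vertex only moves while all its neighbors share one color, so the walks of adjacent vertices `u`
and `v` satisfy `S(v) = (α v, α u) · S(u) · (β u, β v)` in `π(H)`, and hence
`S(v) = α(W)⁻¹ · S(q) · β(W)` for every walk `W` from `q` to `v`. In an `H`-recoloring sequence an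
arc at `v` orients every move `(a h)(h b)` of `v`, so the raw walk `S(v)` is a zigzag; as `H` has
no loops, cancelling backtracking keeps it a zigzag.

Conversely, start from a `\bar H`-realization and allow steps that change nothing. If some `S(v)` is
not reduced, `v` makes two moves through the same neighbor color `h` and stays put in between.
For such a pair with the shortest middle, the neighbors of `v` keep the color `h` throughout the
middle, so `v` may keep its first color there instead; this shortens the sequence and changes
`S(q)` only by cancelling a backtracking. Once every `S(v)` is reduced, orientation compatibility
makes each of them a zigzag, which says that every move respects the arcs of `H`, so all colorings
are homomorphisms `G → H`.
-/

section Groupoid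

variable {X : Type}

theorem RStep.append_left {l l' : List X} (c : List X) (h : RStep l l') :
    RStep (c ++ l) (c ++ l') := by
  rcases h with ⟨p, s, x, y, rfl, rfl⟩ | ⟨p, s, x, rfl, rfl⟩
  · exact Or.inl ⟨c ++ p, s, x, y, by simp, by simp⟩
  · exact Or.inr ⟨c ++ p, s, x, by simp, by simp⟩

theorem RStep.append_right {l l' : List X} (c : List X) (h : RStep l l') :
    RStep (l ++ c) (l' ++ c) := by
  rcases h with ⟨p, s, x, y, rfl, rfl⟩ | ⟨p, s, x, rfl, rfl⟩
  · exact Or.inl ⟨p, s ++ c, x, y, by simp, by simp⟩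
  · exact Or.inr ⟨p, s ++ c, x, by simp, by simp⟩

theorem RStep.head?_eq {l l' : List X} (h : RStep l l') : l.head? = l'.head? := by
  rcases h with ⟨p, s, x, y, rfl, rfl⟩ | ⟨p, s, x, rfl, rfl⟩ <;> cases p <;> rfl

theorem PiEq.refl (l : List X) : PiEq l l := Relation.EqvGen.refl l

theorem PiEq.symm {l l' : List X} (h : PiEq l l') : PiEq l' l := Relation.EqvGen.symm _ _ h

theorem PiEq.trans {l l' l'' : List X} (h : PiEq l l') (h' : PiEq l' l'') : PiEq l l'' :=
  Relation.EqvGen.trans _ _ _ h h'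

theorem PiEq.of_rstep {l l' : List X} (h : RStep l l') : PiEq l l' := Relation.EqvGen.rel _ _ h

theorem PiEq.map {f : List X → List X} (hf : ∀ l l', RStep l l' → RStep (f l) (f l'))
    {l l' : List X} (h : PiEq l l') : PiEq (f l) (f l') := by
  induction h with
  | rel a b hab => exact PiEq.of_rstep (hf a b hab)
  | refl a => exact PiEq.refl _
  | symm a b _ ih => exact ih.symm
  | trans a b c _ _ ih₁ ih₂ => exact ih₁.trans ih₂

theorem PiEq.append_append (c d : List X) {l l' : List X} (h : PiEq l l') :
    PiEq (c ++ l ++ d) (c ++ l' ++ d) :=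
  h.map fun _ _ hs => (hs.append_left c).append_right d

theorem PiEq.head?_eq {l l' : List X} (h : PiEq l l') : l.head? = l'.head? := by
  induction h with
  | rel a b hab => exact hab.head?_eq
  | refl a => rfl
  | symm a b _ ih => exact ih.symm
  | trans a b c _ _ ih₁ ih₂ => exact ih₁.trans ih₂

def NoBacktrack : List X → Prop
  | x :: y :: l => x ≠ y ∧ (∀ z ∈ l.head?, x ≠ z) ∧ NoBacktrack (y :: l)
  | _ => True

theorem NoBacktrack.of_cons {x : X} {l : List X} (h : NoBacktrack (x :: l)) : NoBacktrack l := by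
  cases l with
  | nil => trivial
  | cons y t => exact h.2.2

theorem NoBacktrack.tail {l : List X} (h : NoBacktrack l) : NoBacktrack l.tail := by
  cases l with
  | nil => trivial
  | cons y t => exact h.of_cons

theorem NoBacktrack.of_append {p l : List X} (h : NoBacktrack (p ++ l)) : NoBacktrack l := by
  induction p with
  | nil => exact h
  | cons a p ih => exact ih h.of_cons

theorem isReduced_iff_noBacktrack (l : List X) : IsReduced l ↔ NoBacktrack l := by
  constructor
  · intro h
    induction l with
    | nil => trivial
    | cons x l ih =>
      rcases l with _ | ⟨y, l⟩
      · trivial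
      refine ⟨fun hxy => h _ (Or.inr ⟨[], l, x, by simp [hxy], rfl⟩), fun z hz hxz => ?_,
        ih fun l' hs => h _ (hs.append_left [x])⟩
      obtain ⟨t, rfl⟩ : ∃ t, l = z :: t := ⟨l.tail, List.eq_cons_of_mem_head? hz⟩
      exact h _ (Or.inl ⟨[], t, x, y, by simp [hxz], rfl⟩)
  · rintro h l' (⟨p, s, x, y, rfl, -⟩ | ⟨p, s, x, rfl, -⟩)
    · have := NoBacktrack.of_append (p := p) (l := x :: y :: x :: s) (by simpa using h)
      exact this.2.1 x rfl rfl
    · exact (NoBacktrack.of_append (p := p) (l := x :: x :: s) (by simpa using h)).1 rfl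

section Normalization

variable [DecidableEq X]

/-- Appends `x` to a reduced walk that is stored in reverse order, reducing on the fly. -/
def push (x : X) (s : List X) : List X :=
  if s.head? = some x then s else if s.tail.head? = some x then s.tail else x :: s

theorem push_head? (x : X) (s : List X) : (push x s).head? = some x := by
  unfold push; split_ifs with h₁ h₂ <;> simp_all

theorem NoBacktrack.push (x : X) {s : List X} (h : NoBacktrack s) : NoBacktrack (push x s) := by
  unfold HRecoloring.push
  split_ifs with h₁ h₂
  · exact h
  · exact h.tail
  · rcases s with _ | ⟨y, _ | ⟨z, t⟩⟩
    · trivial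
    · exact ⟨fun e => h₁ (by simp [e]), by simp, trivial⟩
    · exact ⟨fun e => h₁ (by simp [e]), fun w hw e => h₂ (by simp_all), h⟩

theorem push_push_self (x : X) (s : List X) : push x (push x s) = push x s := by
  rw [push, if_pos (push_head? x s)]

theorem push_push_push (x y : X) {s : List X} (h : NoBacktrack (push x s)) :
    push x (push y (push x s)) = push x s := by
  obtain ⟨u, hu⟩ : ∃ u, push x s = x :: u :=
    ⟨(push x s).tail, List.eq_cons_of_mem_head? (push_head? x s)⟩
  rw [hu] at h ⊢
  by_cases hyx : y = x
  · subst hyx; simp [push]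
  by_cases hu₁ : u.head? = some y
  · obtain ⟨u', rfl⟩ : ∃ u', u = y :: u' := ⟨u.tail, List.eq_cons_of_mem_head? hu₁⟩
    have hxu' : u'.head? ≠ some x := fun e => h.2.1 x e rfl
    simp [push, hyx, Ne.symm hyx, hxu']
  · simp [push, hyx, Ne.symm hyx, hu₁]

def reduce (l : List X) : List X := (l.foldl (fun s x => push x s) []).reverse

theorem noBacktrack_foldl_push (s l : List X) (h : NoBacktrack s) :
    NoBacktrack (l.foldl (fun s x => push x s) s) := by
  induction l generalizing s with
  | nil => exact h
  | cons x l ih => exact ih _ (h.push x)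

theorem reduce_eq_of_rstep {l l' : List X} (h : RStep l l') : reduce l = reduce l' := by
  rcases h with ⟨p, s, x, y, rfl, rfl⟩ | ⟨p, s, x, rfl, rfl⟩
  · simp only [reduce, List.foldl_append, List.foldl_cons, List.foldl_nil,
      push_push_push x y ((noBacktrack_foldl_push [] p trivial).push x)]
  · simp only [reduce, List.foldl_append, List.foldl_cons, List.foldl_nil, push_push_self]

theorem reduce_eq_of_piEq {l l' : List X} (h : PiEq l l') : reduce l = reduce l' := by
  induction h with
  | rel a b hab => exact reduce_eq_of_rstep hab
  | refl a => rfl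
  | symm a b _ ih => exact ih.symm
  | trans a b c _ _ ih₁ ih₂ => exact ih₁.trans ih₂

theorem foldl_push_of_noBacktrack :
    ∀ (l s : List X), NoBacktrack (s.reverse ++ l) →
      l.foldl (fun s x => push x s) s = l.reverse ++ s
  | [], s, _ => by simp
  | x :: l, s, h => by
    have hpush : push x s = x :: s := by
      rcases s with _ | ⟨y, _ | ⟨z, t⟩⟩
      · rfl
      · have : y ≠ x := (by simpa using h : NoBacktrack (y :: x :: l)).1
        simp [push, this]
      · have h' := (by simpa using h : NoBacktrack (t.reverse ++ z :: y :: x :: l)).of_append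
        simp [push, h'.2.2.1, h'.2.1 x rfl]
    rw [List.foldl_cons, hpush, foldl_push_of_noBacktrack l (x :: s) (by simpa using h)]
    simp

theorem reduce_of_noBacktrack {l : List X} (h : NoBacktrack l) : reduce l = l := by
  simp [reduce, foldl_push_of_noBacktrack l [] (by simpa using h)]

theorem reflTransGen_reduce (l : List X) : Relation.ReflTransGen RStep l (reduce l) := by
  induction l using List.reverseRecOn with
  | nil => exact .refl
  | append_singleton l x ih =>
    refine (Relation.ReflTransGen.trans (ih.lift (· ++ [x]) fun _ _ hs => hs.append_right [x])) ?_
    simp only [reduce, List.foldl_append, List.foldl_cons, List.foldl_nil]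
    generalize l.foldl (fun s x => push x s) [] = R
    unfold push
    split_ifs with h₁ h₂
    · obtain ⟨t, rfl⟩ : ∃ t, R = x :: t := ⟨R.tail, List.eq_cons_of_mem_head? h₁⟩
      exact .single (Or.inr ⟨t.reverse, [], x, by simp, by simp⟩)
    · obtain ⟨y, t, rfl⟩ : ∃ y t, R = y :: x :: t := by
        rcases R with _ | ⟨y, R⟩
        · simp at h₂
        · exact ⟨y, R.tail, by rw [← List.eq_cons_of_mem_head? (show R.head? = some x from h₂)]⟩
      exact .single (Or.inl ⟨t.reverse, [], x, y, by simp, by simp⟩)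
    · rw [List.reverse_cons]

end Normalization

theorem PiEq.reflTransGen_of_isReduced {l S : List X} (h : PiEq l S) (hS : IsReduced S) :
    Relation.ReflTransGen RStep l S := by
  classical
  rw [← reduce_of_noBacktrack ((isReduced_iff_noBacktrack S).1 hS), ← reduce_eq_of_piEq h]
  exact reflTransGen_reduce l

end Groupoid

section Alternating

variable {V X : Type}

/-- Orientation `true` is that of `TypeIN` (`∃ u, G.Arc true v u`), `false` that of `TypeOUT`. -/
def Dgraph.Arc (G : Dgraph V) (t : Bool) (a b : V) : Prop := if t then G.Adj b a else G.Adj a b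

theorem Dgraph.arc_not {G : Dgraph V} {t : Bool} {a b : V} : G.Arc (!t) a b ↔ G.Arc t b a := by
  cases t <;> rfl

theorem Dgraph.Arc.uAdj {G : Dgraph V} {t : Bool} {a b : V} (h : G.Arc t a b) : G.UAdj a b := by
  cases t
  · exact Or.inl h
  · exact Or.inr h

theorem Dgraph.Loopless.not_arc {G : Dgraph V} (hG : G.Loopless) (t : Bool) (a : V) :
    ¬ G.Arc t a a := by
  cases t <;> exact hG a

theorem IsHom.arc {G : Dgraph V} {H : Dgraph X} {σ : V → X} (hσ : IsHom G H σ) {t : Bool}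
    {a b : V} (h : G.Arc t a b) : H.Arc t (σ a) (σ b) := by
  cases t <;> exact hσ h

def IsZigzag (H : Dgraph X) : Bool → List X → Prop
  | t, a :: b :: l => H.Arc t a b ∧ IsZigzag H (!t) (b :: l)
  | _, _ => True

variable {H : Dgraph X}

theorem isZigzag_cons_iff {t : Bool} {a : X} {l : List X} :
    IsZigzag H t (a :: l) ↔ (∀ b ∈ l.head?, H.Arc t a b) ∧ IsZigzag H (!t) l := by
  rcases l with _ | ⟨b, l⟩ <;> simp [IsZigzag]

theorem isZigzag_iff_getElem {t : Bool} {l : List X} :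
    IsZigzag H t l ↔
      ∀ i (h : i + 1 < l.length), H.Arc (if i % 2 = 0 then t else !t) l[i] l[i + 1] := by
  induction l generalizing t with
  | nil => simp [IsZigzag]
  | cons a l ih =>
    rcases l with _ | ⟨b, l⟩
    · simp [IsZigzag]
    have hpar : ∀ i, (if (i + 1) % 2 = 0 then t else !t) = (if i % 2 = 0 then !t else t) := by
      intro i
      rcases Nat.mod_two_eq_zero_or_one i with h | h <;> simp [h, Nat.succ_mod_two_eq_zero_iff]
    rw [IsZigzag, ih]
    simp only [Bool.not_not]
    constructor
    · rintro ⟨hab, hl⟩ (_ | i) hi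
      · simpa using hab
      · have := hl i (by simpa using hi)
        rw [← hpar] at this
        simpa using this
    · intro h
      refine ⟨by simpa using h 0 (by simp), fun i hi => ?_⟩
      have := h (i + 1) (by simpa using hi)
      rw [hpar] at this
      simpa using this

theorem inCompatible_iff_isZigzag {l : List X} : INCompatible H l ↔ IsZigzag H true l := by
  rw [isZigzag_iff_getElem, INCompatible]
  refine forall_congr' fun i => forall_congr' fun hi => ?_
  split_ifs <;> simp [Dgraph.Arc]

theorem outCompatible_iff_isZigzag {l : List X} : OUTCompatible H l ↔ IsZigzag H false l := by
  rw [isZigzag_iff_getElem, OUTCompatible]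
  refine forall_congr' fun i => forall_congr' fun hi => ?_
  split_ifs <;> simp [Dgraph.Arc]

theorem zigzag_iff {G : Dgraph V} {v : V} {l : List X} :
    Zigzag G H v l ↔ ∀ t, (∃ u, G.Arc t v u) → IsZigzag H t l := by
  rw [Zigzag, TypeIN, TypeOUT, inCompatible_iff_isZigzag, outCompatible_iff_isZigzag]
  constructor
  · rintro ⟨hin, hout⟩ (_ | _) hv
    · exact hout hv
    · exact hin hv
  · intro h
    exact ⟨h true, h false⟩

theorem IsZigzag.append_of_imp {l l' : List X} (hhead : l.head? = l'.head?)
    (h : ∀ t, IsZigzag H t l → IsZigzag H t l') :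
    ∀ (p : List X) (t : Bool), IsZigzag H t (p ++ l) → IsZigzag H t (p ++ l')
  | [], t, hl => h t hl
  | a :: p, t, hl => by
    rw [List.cons_append, isZigzag_cons_iff] at hl ⊢
    refine ⟨?_, IsZigzag.append_of_imp hhead h p _ hl.2⟩
    rcases p with _ | ⟨b, p⟩
    · simpa [← hhead] using hl.1
    · simpa using hl.1

theorem IsZigzag.of_rstep (hH : H.Loopless) {l l' : List X} (hs : RStep l l') {t : Bool}
    (hl : IsZigzag H t l) : IsZigzag H t l' := by
  rcases hs with ⟨p, s, x, y, rfl, rfl⟩ | ⟨p, s, x, rfl, rfl⟩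
  · simp only [List.append_assoc, List.cons_append, List.nil_append] at hl ⊢
    refine IsZigzag.append_of_imp (l := x :: y :: x :: s) (l' := x :: s) rfl (fun t h => ?_) p t hl
    simp only [IsZigzag] at h
    simpa using h.2.2
  · simp only [List.append_assoc, List.cons_append, List.nil_append] at hl ⊢
    refine IsZigzag.append_of_imp (l := x :: x :: s) (l' := x :: s) rfl (fun t h => ?_) p t hl
    simp only [IsZigzag] at h
    exact absurd h.1 (hH.not_arc t x)

theorem IsZigzag.of_reflTransGen (hH : H.Loopless) {l l' : List X}
    (hs : Relation.ReflTransGen RStep l l') {t : Bool} (hl : IsZigzag H t l) : IsZigzag H t l' := by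
  induction hs with
  | refl => exact hl
  | tail _ hstep ih => exact ih.of_rstep hH hstep

end Alternating

section VertexWalks

variable {V X : Type}

theorem Dgraph.UAdj.symm {G : Dgraph V} {a b : V} (h : G.UAdj a b) : G.UAdj b a := Or.symm h

theorem Dgraph.Loopless.ne_of_uAdj {G : Dgraph V} (hG : G.Loopless) {a b : V} (h : G.UAdj a b) :
    a ≠ b := by
  rintro rfl
  rcases h with h | h <;> exact hG a h

theorem Dgraph.WConn.exists_uAdj {G : Dgraph V} (hconn : G.WConn) {u₀ w₀ : V}
    (harc : G.Adj u₀ w₀) (v : V) : ∃ w, G.UAdj v w := by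
  obtain ⟨l, hne, hhead, hlast, hchain⟩ := hconn v u₀
  rcases l with _ | ⟨x, _ | ⟨y, l⟩⟩
  · exact absurd rfl hne
  · obtain ⟨⟩ := Option.some.inj hhead
    obtain ⟨⟩ := Option.some.inj hlast
    exact ⟨w₀, Or.inl harc⟩
  · obtain ⟨⟩ := Option.some.inj hhead
    exact ⟨y, (List.isChain_cons_cons.1 hchain).1⟩

def AtMostOneChange (σ σ' : V → X) : Prop := ∀ u, σ u ≠ σ' u → ∀ w, w ≠ u → σ w = σ' w

theorem AtMostOneChange.of_existsUnique {σ σ' : V → X} (h : ∃! u, σ u ≠ σ' u) :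
    AtMostOneChange σ σ' := by
  obtain ⟨z, -, huniq⟩ := h
  intro u hu w hw
  by_contra hcon
  exact hw ((huniq w hcon).trans (huniq u hu).symm)

theorem AtMostOneChange.existsUnique {σ σ' : V → X} (h : AtMostOneChange σ σ') (hne : σ ≠ σ') :
    ∃! u, σ u ≠ σ' u := by
  obtain ⟨u, hu⟩ := Function.ne_iff.1 hne
  exact ⟨u, hu, fun w hw => by_contra fun hwu => hw (h u hu w hwu)⟩

theorem AtMostOneChange.update [DecidableEq V] {σ σ' : V → X} (h : AtMostOneChange σ σ')
    (v : V) (a : X) : AtMostOneChange (Function.update σ v a) (Function.update σ' v a) := by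
  intro u hu w hw
  by_cases hwv : w = v
  · subst hwv; simp
  have huv : u ≠ v := by rintro rfl; simp at hu
  simp only [Function.update_of_ne huv] at hu
  simp only [Function.update_of_ne hwv]
  exact h u hu w hw

def MonoStep (G : Dgraph V) (σ σ' : V → X) : Prop :=
  ∀ v, σ v ≠ σ' v → ∃ h, ∀ w, G.UAdj v w → σ w = h

theorem MonoStep.update [DecidableEq V] {G : Dgraph V} {σ σ' : V → X} (h : MonoStep G σ σ')
    {v : V} (a : X) (hnb : ∀ w, G.UAdj v w → σ w = σ' w) :
    MonoStep G (Function.update σ v a) (Function.update σ' v a) := by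
  intro u hu
  have huv : u ≠ v := by rintro rfl; simp at hu
  simp only [Function.update_of_ne huv] at hu
  have hvu : ¬ G.UAdj v u := fun hvu => hu (hnb u hvu)
  obtain ⟨h₀, hh₀⟩ := h u hu
  refine ⟨h₀, fun z hz => ?_⟩
  have hzv : z ≠ v := by rintro rfl; exact hvu hz.symm
  rw [Function.update_of_ne hzv]
  exact hh₀ z hz

variable {G : Dgraph V} {v : V}

theorem VWalk.head? {L : List (V → X)} {S : List X} (h : VWalk G v L S) :
    S.head? = L.head?.map (· v) := by
  induction h with
  | single σ => rfl
  | stay hst _ ih => simp [ih, hst]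
  | move => rfl

theorem VWalk.eq_cons {σ : V → X} {L : List (V → X)} {S : List X} (h : VWalk G v (σ :: L) S) :
    S = σ v :: S.tail :=
  List.eq_cons_of_mem_head? (by simp [h.head?])

theorem VWalk.getLast? {L : List (V → X)} {S : List X} (h : VWalk G v L S) :
    S.getLast? = L.getLast?.map (· v) := by
  induction h with
  | single σ => rfl
  | stay _ _ ih => rw [List.getLast?_cons_cons, ih]
  | move _ _ _ hw ih =>
    rw [List.getLast?_cons_cons, hw.eq_cons, List.getLast?_cons_cons, ← hw.eq_cons, ih,
      List.getLast?_cons_cons]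

theorem vwalk_singleton_iff {σ : V → X} {S : List X} : VWalk G v [σ] S ↔ S = [σ v] := by
  constructor
  · rintro ⟨⟩; rfl
  · rintro rfl; exact VWalk.single σ

theorem vwalk_cons_iff {τ σ' : V → X} {L : List (V → X)} {S : List X}
    (hL : L.head? = some σ') :
    VWalk G v (τ :: L) S ↔ (τ v = σ' v ∧ VWalk G v L S) ∨
      (τ v ≠ σ' v ∧ ∃ h S', (∀ w, G.UAdj v w → τ w = h) ∧ VWalk G v L S' ∧
        S = τ v :: h :: S') := by
  obtain ⟨L, rfl⟩ : ∃ L', L = σ' :: L' := ⟨L.tail, List.eq_cons_of_mem_head? hL⟩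
  constructor
  · rintro (_ | ⟨hst, hw⟩ | ⟨h, hne, hnb, hw⟩)
    · exact Or.inl ⟨hst, hw⟩
    · exact Or.inr ⟨hne, h, _, hnb, hw, rfl⟩
  · rintro (⟨hst, hw⟩ | ⟨hne, h, S', hnb, hw, rfl⟩)
    · exact VWalk.stay hst hw
    · exact VWalk.move h hne hnb hw

theorem vwalk_cons_iff_of_eq {τ σ' : V → X} {L : List (V → X)} {S : List X}
    (hL : L.head? = some σ') (hst : τ v = σ' v) : VWalk G v (τ :: L) S ↔ VWalk G v L S := by
  rw [vwalk_cons_iff hL]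
  simp [hst]

theorem exists_vwalk {L : List (V → X)} (hL : L ≠ []) (hm : MonoNbhd G L) :
    ∃ S, VWalk G v L S := by
  induction L with
  | nil => exact absurd rfl hL
  | cons σ L ih =>
    rcases L with _ | ⟨σ', L⟩
    · exact ⟨_, VWalk.single σ⟩
    obtain ⟨S, hS⟩ := ih (List.cons_ne_nil _ _) hm.tail
    by_cases hst : σ v = σ' v
    · exact ⟨S, VWalk.stay hst hS⟩
    · obtain ⟨h, hh⟩ := (List.isChain_cons_cons.1 hm).1 v hst
      exact ⟨_, VWalk.move h hst hh hS⟩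

theorem VWalk.unique (hv : ∃ w, G.UAdj v w) {L : List (V → X)} {S S' : List X}
    (h : VWalk G v L S) (h' : VWalk G v L S') : S = S' := by
  obtain ⟨w, hw⟩ := hv
  induction h generalizing S' with
  | single σ => exact (vwalk_singleton_iff.1 h').symm
  | stay hst _ ih =>
    rcases h' with _ | ⟨_, hw'⟩ | ⟨_, hne⟩
    · exact ih hw'
    · exact absurd hst hne
  | move h hne hnb _ ih =>
    rcases h' with _ | ⟨hst⟩ | ⟨h', _, hnb', hw'⟩
    · exact absurd hst hne
    · rw [← hnb w hw, hnb' w hw, ih hw']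

theorem VWalk.of_forall₂ {L L' : List (V → X)} {S : List X} (h : VWalk G v L S)
    (hL : List.Forall₂ (fun σ σ' => σ v = σ' v ∧ ∀ w, G.UAdj v w → σ w = σ' w) L L') :
    VWalk G v L' S := by
  induction h generalizing L' with
  | single σ =>
    rcases hL with _ | ⟨hσ, ⟨⟩⟩
    rw [hσ.1]
    exact VWalk.single _
  | stay hst _ ih =>
    rcases hL with _ | ⟨hσ, _ | ⟨hσ', hL⟩⟩
    exact VWalk.stay (hσ.1 ▸ hσ'.1 ▸ hst) (ih (.cons hσ' hL))
  | move h hne hnb _ ih =>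
    rcases hL with _ | ⟨hσ, _ | ⟨hσ', hL⟩⟩
    rw [hσ.1]
    exact VWalk.move h (hσ.1 ▸ hσ'.1 ▸ hne) (fun w hw => hσ.2 w hw ▸ hnb w hw) (ih (.cons hσ' hL))

theorem vwalk_append_cons_iff {P C : List (V → X)} {ρ : V → X} {S : List X} :
    VWalk G v (P ++ ρ :: C) S ↔
      ∃ S₁ S₂, VWalk G v (P ++ [ρ]) S₁ ∧ VWalk G v (ρ :: C) S₂ ∧ S = S₁ ++ S₂.tail := by
  induction P generalizing S with
  | nil =>
    refine ⟨fun h => ⟨_, S, VWalk.single ρ, h, h.eq_cons⟩, ?_⟩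
    rintro ⟨S₁, S₂, h₁, h₂, rfl⟩
    rw [vwalk_singleton_iff.1 h₁, List.singleton_append, ← h₂.eq_cons]
    exact h₂
  | cons τ P ih =>
    obtain ⟨σ', hσ'⟩ : ∃ σ', (P ++ [ρ]).head? = some σ' := by cases P <;> simp
    have hσ'' : (P ++ ρ :: C).head? = some σ' := by cases P <;> simpa using hσ'
    simp only [List.cons_append, vwalk_cons_iff hσ', vwalk_cons_iff hσ'', ih]
    constructor
    · rintro (⟨hst, S₁, S₂, h₁, h₂, rfl⟩ | ⟨hne, h, S', hnb, ⟨S₁, S₂, h₁, h₂, rfl⟩, rfl⟩)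
      · exact ⟨S₁, S₂, Or.inl ⟨hst, h₁⟩, h₂, rfl⟩
      · exact ⟨_, S₂, Or.inr ⟨hne, h, S₁, hnb, h₁, rfl⟩, h₂, rfl⟩
    · rintro ⟨S₁, S₂, ⟨hst, h₁⟩ | ⟨hne, h, S₁, hnb, h₁, rfl⟩, h₂, rfl⟩
      · exact Or.inl ⟨hst, S₁, S₂, h₁, h₂, rfl⟩
      · exact Or.inr ⟨hne, h, _, hnb, ⟨S₁, S₂, h₁, h₂, rfl⟩, rfl⟩

theorem vwalk_append_iff_of_forall_eq {K L : List (V → X)} {μ : V → X} {b : X} {S : List X}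
    (hK : ∀ ρ ∈ K, ρ v = b) (hμ : K.getLast? = some μ) :
    VWalk G v (K ++ L) S ↔ VWalk G v (μ :: L) S := by
  induction K with
  | nil => simp at hμ
  | cons κ K ih =>
    rcases K with _ | ⟨κ', K⟩
    · simp only [List.getLast?_singleton, Option.some.injEq] at hμ
      rw [hμ]; rfl
    rw [List.getLast?_cons_cons] at hμ
    rw [List.cons_append, vwalk_cons_iff_of_eq (σ' := κ') rfl
      ((hK κ (by simp)).trans (hK κ' (by simp)).symm)]
    exact ih (fun ρ hρ => hK ρ (List.mem_cons_of_mem _ hρ)) hμ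

theorem vwalk_iff_of_forall_eq {L : List (V → X)} {c : X} {S : List X} (hL : L ≠ [])
    (h : ∀ ρ ∈ L, ρ v = c) : VWalk G v L S ↔ S = [c] := by
  have hμ := List.getLast?_eq_some_getLast hL
  rw [← L.append_nil, vwalk_append_iff_of_forall_eq h hμ, vwalk_singleton_iff,
    h _ (List.getLast_mem hL)]

theorem VWalk.replace_infix {A W W' C : List (V → X)} {S : List X} (hW' : W' ≠ [])
    (hhead : W'.head? = W.head?) (hlast : W'.getLast? = W.getLast?)
    (hseg : ∀ S₀, VWalk G v W S₀ → ∃ S₀', VWalk G v W' S₀' ∧ PiEq S₀ S₀')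
    (h : VWalk G v (A ++ W ++ C) S) : ∃ S', VWalk G v (A ++ W' ++ C) S' ∧ PiEq S S' := by
  obtain ⟨σ, W₁', rfl⟩ : ∃ σ W₁', W' = σ :: W₁' := List.exists_cons_of_ne_nil hW'
  obtain ⟨W₁, rfl⟩ : ∃ W₁, W = σ :: W₁ := ⟨W.tail, List.eq_cons_of_mem_head? hhead.symm⟩
  obtain ⟨W₀', ω, hW₀'⟩ : ∃ W₀' ω, σ :: W₁' = W₀' ++ [ω] :=
    ⟨_, _, (List.dropLast_append_getLast (List.cons_ne_nil σ W₁')).symm⟩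
  obtain ⟨W₀, hW₀⟩ : ∃ W₀, σ :: W₁ = W₀ ++ [ω] := by
    refine ⟨(σ :: W₁).dropLast, ?_⟩
    rw [hW₀', List.getLast?_concat, eq_comm, List.getLast?_eq_some_iff] at hlast
    obtain ⟨W₀, hW₀⟩ := hlast
    simp [hW₀]
  rw [List.append_assoc, List.cons_append, vwalk_append_cons_iff] at h
  rw [List.append_assoc, List.cons_append]
  obtain ⟨SA, SR, hA, hR, rfl⟩ := h
  rw [← List.cons_append, hW₀, List.append_assoc, List.singleton_append,
    vwalk_append_cons_iff] at hR
  obtain ⟨SW, SC, hW, hC, rfl⟩ := hR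
  rw [← hW₀] at hW
  obtain ⟨SW', hW', hpi⟩ := hseg SW hW
  refine ⟨_, vwalk_append_cons_iff.2 ⟨SA, SW' ++ SC.tail, hA, ?_, rfl⟩, ?_⟩
  · rw [← List.cons_append, hW₀', List.append_assoc, List.singleton_append,
      vwalk_append_cons_iff]
    exact ⟨SW', SC, hW₀' ▸ hW', hC, rfl⟩
  · obtain ⟨SA₀, hSA⟩ : ∃ SA₀, SA = SA₀ ++ [σ v] := by
      have := hA.getLast?
      rw [List.getLast?_concat, Option.map_some, List.getLast?_eq_some_iff] at this
      exact this
    rw [hW.eq_cons, hW'.eq_cons] at hpi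
    rw [hSA, hW.eq_cons, hW'.eq_cons]
    simpa using hpi.append_append SA₀ SC.tail

end VertexWalks

section Conjugation

variable {V X : Type} {G : Dgraph V}

theorem VWalk.piEq_of_uAdj {u v : V} (huv : G.UAdj u v) (hne : u ≠ v) {L : List (V → X)}
    {σ₀ σN : V → X} {Su Sv : List X} (hL : L.IsChain AtMostOneChange)
    (hhead : L.head? = some σ₀) (hlast : L.getLast? = some σN)
    (hu : VWalk G u L Su) (hv : VWalk G v L Sv) : PiEq Sv ([σ₀ v] ++ Su ++ [σN v]) := by
  induction hv generalizing Su σ₀ with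
  | single σ =>
    cases hhead; cases hlast
    rw [vwalk_singleton_iff.1 hu]
    exact (PiEq.of_rstep (Or.inl ⟨[], [], σ v, σ u, rfl, rfl⟩)).symm
  | @stay σ σ' rest _ hst _ ih =>
    cases hhead
    rw [List.getLast?_cons_cons] at hlast
    cases hu with
    | stay _ hu => simpa [hst] using ih hL.tail rfl hlast hu
    | @move _ _ _ Su _ _ hnb hu =>
      rw [← hnb v huv]
      refine (ih hL.tail rfl hlast hu).trans (PiEq.of_rstep ?_).symm
      exact Or.inl ⟨[], Su ++ [σN v], σ v, σ u, by simp, by simp [hst]⟩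
  | @move σ σ' rest Sv h hmove hnb _ ih =>
    cases hhead
    rw [List.getLast?_cons_cons] at hlast
    have hσu : σ u = σ' u := (List.isChain_cons_cons.1 hL).1 v hmove u hne
    cases hu with
    | stay _ hu =>
      have h₁ : PiEq (σ v :: σ u :: Sv) ([σ v] ++ [σ u, σ' v, σ u] ++ (Su.tail ++ [σN v])) := by
        have := (ih hL.tail rfl hlast hu).append_append [σ v, σ u] []
        rw [hu.eq_cons, ← hσu] at this
        simpa using this
      rw [← hnb u huv.symm, hu.eq_cons, ← hσu]
      exact h₁.trans (PiEq.of_rstep (Or.inl ⟨[σ v], _, σ u, σ' v, rfl, by simp⟩))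
    | move _ hne' => exact absurd hσu hne'

theorem conj_cons (α β : V → X) (w : V) (W : List V) {Q : List X} (hQ : Q.head? = some (α w)) :
    conj α β (w :: W) Q = (W.map α).reverse ++ Q ++ W.map β := by
  rw [List.eq_cons_of_mem_head? hQ]
  simp [conj, wcomp]

theorem PiEq.conj (α β : V → X) {W : List V} {w : V} (hW : W.head? = some w) {Q Q' : List X}
    (hQ : Q.head? = some (α w)) (hQ' : Q'.head? = some (α w)) (h : PiEq Q Q') :
    PiEq (conj α β W Q) (conj α β W Q') := by
  rw [List.eq_cons_of_mem_head? hW, conj_cons α β w _ hQ, conj_cons α β w _ hQ']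
  exact h.append_append _ _

theorem VWalk.piEq_conj (hG : G.Loopless) (hnbr : ∀ w : V, ∃ w', G.UAdj w w')
    {L : List (V → X)} {σ₀ σN : V → X} (hL : L.IsChain AtMostOneChange) (hm : MonoNbhd G L)
    (hhead : L.head? = some σ₀) (hlast : L.getLast? = some σN) :
    ∀ {W : List V} {u v : V}, IsWalk G u v W → ∀ {Su Sv : List X},
      VWalk G u L Su → VWalk G v L Sv → PiEq Sv (conj σ₀ σN W Su)
  | [], _, _, hW, _, _, _, _ => absurd rfl hW.1
  | [x], u, v, hW, Su, Sv, hu, hv => by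
    obtain ⟨-, ⟨⟩, ⟨⟩, -⟩ := hW
    rw [conj_cons σ₀ σN x [] (by simp [hu.head?, hhead])]
    simpa [hu.unique (hnbr _) hv] using PiEq.refl Sv
  | x :: y :: W, u, v, hW, Su, Sv, hu, hv => by
    obtain ⟨-, ⟨⟩, hlastW, hchain⟩ := hW
    obtain ⟨hxy, hchain⟩ := List.isChain_cons_cons.1 hchain
    obtain ⟨Sy, hy⟩ := exists_vwalk (v := y) (by rintro rfl; simp at hhead) hm
    have ih := VWalk.piEq_conj hG hnbr hL hm hhead hlast
      ⟨List.cons_ne_nil _ _, rfl, by simpa using hlastW, hchain⟩ hy hv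
    have hedge := VWalk.piEq_of_uAdj hxy (hG.ne_of_uAdj hxy) hL hhead hlast hu hy
    refine ih.trans ((PiEq.conj σ₀ σN rfl (by simp [hy.head?, hhead]) (by simp) hedge).trans ?_)
    rw [conj_cons σ₀ σN x _ (by simp [hu.head?, hhead]),
      conj_cons σ₀ σN y W (Q := [σ₀ y] ++ Su ++ [σN y]) (by simp)]
    simpa using PiEq.refl _

end Conjugation

section Forward

variable {V X : Type} {G : Dgraph V} {H : Dgraph X}

theorem VWalk.isZigzag (hG : G.Loopless) {v u : V} {t : Bool} (hvu : G.Arc t v u)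
    {L : List (V → X)} {S : List X} (hhom : ∀ σ ∈ L, IsHom G H σ)
    (hL : L.IsChain AtMostOneChange) (h : VWalk G v L S) : IsZigzag H t S := by
  induction h with
  | single σ => trivial
  | stay _ _ ih => exact ih (fun σ hσ => hhom σ (List.mem_cons_of_mem _ hσ)) hL.tail
  | @move σ σ' rest S h hmove hnb hw ih =>
    have hσu : σ u = h := hnb u hvu.uAdj
    have hσ'u : σ' u = h :=
      ((List.isChain_cons_cons.1 hL).1 v hmove u (hG.ne_of_uAdj hvu.uAdj).symm).symm.trans hσu
    have ih := ih (fun σ hσ => hhom σ (List.mem_cons_of_mem _ hσ)) hL.tail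
    rw [hw.eq_cons] at ih ⊢
    simp only [IsZigzag, Bool.not_not, Dgraph.arc_not]
    exact ⟨hσu ▸ (hhom σ (by simp)).arc hvu, hσ'u ▸ (hhom σ' (by simp)).arc hvu, ih⟩

theorem MRealizable.orientCompatible (hG : G.Loopless) (hH : H.Loopless)
    (hnbr : ∀ w : V, ∃ w', G.UAdj w w') {α β : V → X} {q : V} {Q : List X}
    (h : MRealizable G H α β q Q) : OrientCompatible G H α β q Q := by
  obtain ⟨L, Sq, ⟨hne, hhom, hstep⟩, hhead, hlast, hmono, hq, hpi⟩ := h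
  have hL : L.IsChain AtMostOneChange := hstep.imp fun _ _ => AtMostOneChange.of_existsUnique
  intro v W hW S hS hpiS
  obtain ⟨Sv, hv⟩ := exists_vwalk hne hmono
  have hSq : Sq.head? = some (α q) := by simp [hq.head?, hhead]
  have hSvS : PiEq Sv S :=
    ((hq.piEq_conj hG hnbr hL hmono hhead hlast hW hv).trans
      (hpi.conj α β hW.2.1 hSq (hpi.head?_eq ▸ hSq))).trans hpiS
  rw [zigzag_iff]
  rintro t ⟨u, hvu⟩
  exact (hv.isZigzag hG hvu hhom hL).of_reflTransGen hH (hSvS.reflTransGen_of_isReduced hS)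

end Forward

section LazyRealization

variable {V X : Type} {G : Dgraph V} {H : Dgraph X}

theorem Dgraph.uAdj_usym {u w : V} : G.usym.UAdj u w ↔ G.UAdj u w :=
  ⟨fun h => h.elim id Or.symm, Or.inl⟩

theorem VWalk.of_usym {v : V} {L : List (V → X)} {S : List X} (h : VWalk G.usym v L S) :
    VWalk G v L S := by
  induction h with
  | single σ => exact VWalk.single σ
  | stay hst _ ih => exact VWalk.stay hst ih
  | move h hne hnb _ ih => exact VWalk.move h hne (fun w hw => hnb w (Dgraph.uAdj_usym.2 hw)) ih

theorem MonoNbhd.of_usym {L : List (V → X)} (h : MonoNbhd G.usym L) : L.IsChain (MonoStep G) :=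
  h.imp fun _ _ h u hu => (h u hu).imp fun _ hc w hw => hc w (Dgraph.uAdj_usym.2 hw)

theorem _root_.List.IsChain.replace_infix {α : Type} {R : α → α → Prop} {A W W' C : List α}
    (h : (A ++ W ++ C).IsChain R) (hW' : W'.IsChain R) (hne : W' ≠ [])
    (hhead : W'.head? = W.head?) (hlast : W'.getLast? = W.getLast?) :
    (A ++ W' ++ C).IsChain R := by
  have hne' : W ≠ [] := by rintro rfl; simp [List.head?_eq_none_iff.not.2 hne] at hhead
  obtain ⟨hAW, hC, hjC⟩ := List.isChain_append.1 h
  obtain ⟨hA, -, hjA⟩ := List.isChain_append.1 hAW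
  refine List.IsChain.append (List.IsChain.append hA hW' (hhead ▸ hjA)) hC ?_
  simpa [List.getLast?_append, hlast, List.getLast?_eq_some_getLast hne'] using hjC

/-- A `\bar H`-realization of `Q` whose steps may also leave the coloring unchanged. -/
structure IsLazyRealization (G : Dgraph V) (H : Dgraph X) (α β : V → X) (q : V) (Q : List X)
    (L : List (V → X)) : Prop where
  hom : ∀ σ ∈ L, IsHom G.usym H.usym σ
  step : L.IsChain AtMostOneChange
  mono : L.IsChain (MonoStep G)
  head : L.head? = some α
  last : L.getLast? = some β
  walk : ∃ S, VWalk G q L S ∧ PiEq S Q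

theorem MRealizable.exists_isLazyRealization {α β : V → X} {q : V} {Q : List X}
    (h : MRealizable G.usym H.usym α β q Q) : ∃ L, IsLazyRealization G H α β q Q L := by
  obtain ⟨L, S, ⟨-, hhom, hstep⟩, hhead, hlast, hmono, hq, hpi⟩ := h
  exact ⟨L, hhom, hstep.imp fun _ _ => AtMostOneChange.of_existsUnique, hmono.of_usym, hhead,
    hlast, S, hq.of_usym, hpi⟩

theorem MRealizable.of_usym {α β : V → X} {q : V} {Q : List X}
    (h : MRealizable G.usym H.usym α β q Q)
    (hhom : ∀ σ : V → X, IsHom G.usym H.usym σ → IsHom G H σ) : MRealizable G H α β q Q := by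
  obtain ⟨L, S, ⟨hne, hhom', hstep⟩, hhead, hlast, hmono, hq, hpi⟩ := h
  exact ⟨L, S, ⟨hne, fun σ hσ => hhom σ (hhom' σ hσ), hstep⟩, hhead, hlast, hmono.of_usym,
    hq.of_usym, hpi⟩

variable {α β : V → X} {q : V} {Q : List X}

theorem IsLazyRealization.replace_infix {A W W' C : List (V → X)}
    (hR : IsLazyRealization G H α β q Q (A ++ W ++ C)) (hne : W' ≠ [])
    (hhead : W'.head? = W.head?) (hlast : W'.getLast? = W.getLast?)
    (hom : ∀ σ ∈ W', IsHom G.usym H.usym σ) (step : W'.IsChain AtMostOneChange)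
    (mono : W'.IsChain (MonoStep G))
    (walk : ∀ S, VWalk G q W S → ∃ S', VWalk G q W' S' ∧ PiEq S S') :
    IsLazyRealization G H α β q Q (A ++ W' ++ C) := by
  have hne' : W ≠ [] := by rintro rfl; simp [List.head?_eq_none_iff.not.2 hne] at hhead
  obtain ⟨S, hS, hpi⟩ := hR.walk
  obtain ⟨S', hS', hpi'⟩ := hS.replace_infix hne hhead hlast walk
  refine ⟨fun σ hσ => ?_, hR.step.replace_infix step hne hhead hlast,
    hR.mono.replace_infix mono hne hhead hlast, ?_, ?_, S', hS', hpi'.symm.trans hpi⟩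
  · simp only [List.mem_append] at hσ
    rcases hσ with (hσ | hσ) | hσ
    · exact hR.hom σ (by simp [hσ])
    · exact hom σ hσ
    · exact hR.hom σ (by simp [hσ])
  · rw [← hR.head]
    simp only [List.head?_append, hhead]
  · rw [← hR.last]
    simp only [List.getLast?_append, hlast]

theorem IsLazyRealization.remove_stutter {A C : List (V → X)} {ρ : V → X}
    (hR : IsLazyRealization G H α β q Q (A ++ [ρ, ρ] ++ C)) :
    IsLazyRealization G H α β q Q (A ++ [ρ] ++ C) := by
  refine hR.replace_infix (by simp) rfl rfl (fun σ hσ => hR.hom σ (by simp_all))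
    (List.isChain_singleton ρ) (List.isChain_singleton ρ) fun S hS => ⟨S, ?_, PiEq.refl S⟩
  rw [vwalk_iff_of_forall_eq (c := ρ q) (by simp) (by simp)] at hS ⊢
  exact hS

end LazyRealization

section CancellingPairs

variable {V X : Type} {G : Dgraph V} {H : Dgraph X}

theorem exists_split_at_first_not {α : Type} (p : α → Prop) :
    ∀ {l : List α}, (∀ a ∈ l.head?, p a) → (∃ a ∈ l, ¬ p a) →
      ∃ l₁ a b l₂, l = l₁ ++ a :: b :: l₂ ∧ (∀ c ∈ l₁ ++ [a], p c) ∧ ¬ p b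
  | [], _, ⟨_, ha, _⟩ => absurd ha List.not_mem_nil
  | [x], hhead, ⟨a, ha, hna⟩ => by
    rw [List.mem_singleton] at ha
    exact absurd (ha ▸ hhead x rfl) hna
  | x :: y :: l, hhead, ⟨a, ha, hna⟩ => by
    have hx : p x := hhead x rfl
    by_cases hy : p y
    · have ha' : a ∈ y :: l := (List.mem_cons.1 ha).resolve_left fun e => hna (e ▸ hx)
      obtain ⟨l₁, a, b, l₂, hl, hpre, hb⟩ :=
        exists_split_at_first_not p (l := y :: l) (by simpa using hy) ⟨a, ha', hna⟩
      refine ⟨x :: l₁, a, b, l₂, by rw [hl]; rfl, ?_, hb⟩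
      simpa [hx] using hpre
    · exact ⟨[], x, y, l, rfl, by simpa using hx, hy⟩

theorem exists_excursion {α β : Type} (f : α → β) {c : β} {l : List α}
    (hhead : ∀ a ∈ l.head?, f a = c) (hlast : ∀ a ∈ l.getLast?, f a = c)
    (hne : ∃ a ∈ l, f a ≠ c) :
    ∃ l₁ x K y y' l₂, l = l₁ ++ x :: (K ++ [y]) ++ y' :: l₂ ∧ f x = c ∧
      (∀ τ ∈ K ++ [y], f τ = f y) ∧ f y ≠ c ∧ f y ≠ f y' := by
  obtain ⟨l₁, x, x', E, rfl, hpre, hx'⟩ := exists_split_at_first_not (f · = c) hhead hne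
  have hlast' : ∀ a ∈ (x' :: E).getLast?, f a = c := by
    simpa [List.getLast?_append] using hlast
  obtain ⟨K, y, y', l₂, hE, hK, hy'⟩ := exists_split_at_first_not (f · = f x') (l := x' :: E)
    (by simp) ⟨_, List.mem_of_getLast? (List.getLast?_eq_some_getLast (List.cons_ne_nil _ _)),
      fun e => hx' (e ▸ hlast' _ (List.getLast?_eq_some_getLast (List.cons_ne_nil _ _)))⟩
  have hy : f y = f x' := hK y (by simp)
  refine ⟨l₁, x, K, y, y', l₂, by rw [hE]; simp, hpre x (by simp),
    fun τ hτ => (hK τ hτ).trans hy.symm, hy ▸ hx', fun e => hy' (e.symm.trans hy)⟩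

theorem IsHom.ne_of_uAdj {σ : V → X} (hσ : IsHom G.usym H.usym σ) (hH : H.Loopless) {a b : V}
    (hab : G.UAdj a b) : σ a ≠ σ b :=
  hH.ne_of_uAdj (hσ (show G.usym.Adj a b from hab))

/-- The moves of `v` at `σ → K ++ [μ]` and at `μ → ρ` both pass through the neighbor color `h`,
so `S(v)` backtracks there: it reads `(σ v) h (μ v) h (ρ v)`. -/
structure IsCancellingPair (G : Dgraph V) (L : List (V → X)) (v : V) (h : X) (σ : V → X)
    (K : List (V → X)) (μ ρ : V → X) : Prop where
  isInfix : σ :: (K ++ [μ, ρ]) <:+: L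
  move_in : σ v ≠ μ v
  const : ∀ τ ∈ K, τ v = μ v
  move_out : μ v ≠ ρ v
  nbhd_in : ∀ w, G.UAdj v w → σ w = h
  nbhd_out : ∀ w, G.UAdj v w → μ w = h

variable {L : List (V → X)} {v : V} {h : X} {σ μ ρ : V → X} {K : List (V → X)}

theorem IsCancellingPair.cons (hp : IsCancellingPair G L v h σ K μ ρ) (τ : V → X) :
    IsCancellingPair G (τ :: L) v h σ K μ ρ :=
  { hp with isInfix := List.infix_cons hp.isInfix }

theorem IsCancellingPair.color_mid (hp : IsCancellingPair G L v h σ K μ ρ) :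
    ∀ τ ∈ K ++ [μ], τ v = μ v := by
  intro τ hτ
  rcases List.mem_append.1 hτ with hτ | hτ
  · exact hp.const τ hτ
  · rw [List.mem_singleton.1 hτ]

theorem IsCancellingPair.isChain (hp : IsCancellingPair G L v h σ K μ ρ)
    {R : (V → X) → (V → X) → Prop} (hR : L.IsChain R) : (σ :: (K ++ [μ]) ++ [ρ]).IsChain R := by
  simpa using hR.infix hp.isInfix

theorem IsCancellingPair.step_out (hL : L.IsChain AtMostOneChange)
    (hp : IsCancellingPair G L v h σ K μ ρ) : AtMostOneChange μ ρ :=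
  (List.isChain_append.1 (hp.isChain hL)).2.2 μ
    (by rw [← List.cons_append, List.getLast?_concat]; rfl) ρ rfl

theorem VWalk.exists_first_move {v : V} {L : List (V → X)} {b h : X} {S : List X}
    (hw : VWalk G v L (b :: h :: S)) :
    ∃ K μ ρ C, L = K ++ μ :: ρ :: C ∧ (∀ τ ∈ K, τ v = μ v) ∧ μ v = b ∧ μ v ≠ ρ v ∧
      ∀ w, G.UAdj v w → μ w = h := by
  generalize hS : b :: h :: S = S₀ at hw
  induction hw with
  | single => simp at hS
  | @stay σ σ' rest _ hst _ ih =>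
    obtain ⟨K, μ, ρ, C, hsplit, hK, hμ⟩ := ih hS
    refine ⟨σ :: K, μ, ρ, C, by rw [hsplit]; rfl, ?_, hμ⟩
    have hσ' : σ' v = μ v := by
      rcases K with _ | ⟨κ, K⟩ <;> simp only [List.nil_append, List.cons_append,
        List.cons.injEq] at hsplit
      · rw [hsplit.1]
      · rw [hsplit.1]; exact hK κ (by simp)
    simpa [hst, hσ'] using hK
  | @move σ σ' rest _ h' hne hnb _ _ =>
    simp only [List.cons.injEq] at hS
    obtain ⟨rfl, rfl, -⟩ := hS
    exact ⟨[], σ, σ', rest, rfl, by simp, rfl, hne, hnb⟩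

theorem VWalk.exists_cancellingPair (hH : H.Loopless) {v w₀ : V} (hw₀ : G.UAdj v w₀)
    (hG : G.Loopless) {L : List (V → X)} {S : List X}
    (hhom : ∀ σ ∈ L, IsHom G.usym H.usym σ) (hL : L.IsChain AtMostOneChange)
    (hw : VWalk G v L S) (hS : ¬ NoBacktrack S) :
    ∃ h σ K μ ρ, IsCancellingPair G L v h σ K μ ρ := by
  induction hw with
  | single => exact absurd trivial hS
  | @stay σ σ' rest _ _ _ ih =>
    obtain ⟨h, τ, K, μ, ρ, hp⟩ :=
      ih (fun τ hτ => hhom τ (List.mem_cons_of_mem _ hτ)) hL.tail hS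
    exact ⟨h, τ, K, μ, ρ, hp.cons σ⟩
  | @move σ σ' rest S' h hmove hnb hw ih =>
    by_cases hS' : NoBacktrack S'
    · have hσ'w₀ : σ' w₀ = h :=
        ((List.isChain_cons_cons.1 hL).1 v hmove w₀ (hG.ne_of_uAdj hw₀).symm).symm.trans
          (hnb w₀ hw₀)
      have ha : σ v ≠ h := hnb w₀ hw₀ ▸ (hhom σ (by simp)).ne_of_uAdj hH hw₀
      have hb : σ' v ≠ h := hσ'w₀ ▸ (hhom σ' (by simp)).ne_of_uAdj hH hw₀
      obtain ⟨T, hT⟩ : ∃ T, S' = σ' v :: T := ⟨_, hw.eq_cons⟩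
      have hTh : T.head? = some h := by
        by_contra hne
        rw [hT] at hS' hS
        simp only [NoBacktrack] at hS
        exact hS ⟨ha, by simpa using hmove, hb.symm, fun z hz e => hne (e ▸ hz), hS'⟩
      obtain ⟨T', rfl⟩ : ∃ T', T = h :: T' := ⟨_, List.eq_cons_of_mem_head? hTh⟩
      obtain ⟨K, μ, ρ, C, hsplit, hK, hμ, hμρ, hμnb⟩ := (hT ▸ hw).exists_first_move
      exact ⟨h, σ, K, μ, ρ, ⟨[], C, by simp [hsplit]⟩, hμ ▸ hmove, hK, hμρ, hnb, hμnb⟩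
    · obtain ⟨h, τ, K, μ, ρ, hp⟩ :=
        ih (fun τ hτ => hhom τ (List.mem_cons_of_mem _ hτ)) hL.tail hS'
      exact ⟨h, τ, K, μ, ρ, hp.cons σ⟩

theorem IsCancellingPair.exists_shorter (hG : G.Loopless) (hL : L.IsChain AtMostOneChange)
    (hm : L.IsChain (MonoStep G)) (hp : IsCancellingPair G L v h σ K μ ρ) {w : V}
    (hw : G.UAdj v w) (hnc : ∃ τ ∈ K ++ [μ], τ w ≠ h) :
    ∃ h' σ' K' μ' ρ', IsCancellingPair G L w h' σ' K' μ' ρ' ∧ K'.length < K.length := by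
  have hrel : ∀ {R : (V → X) → (V → X) → Prop}, L.IsChain R → ∀ {a b : V → X}
      {l₁ l₂ : List (V → X)}, σ :: (K ++ [μ]) = l₁ ++ a :: b :: l₂ → R a b := by
    intro R hR a b l₁ l₂ e
    refine List.isChain_iff_forall_rel_of_append_cons_cons.1 (hp.isChain hR)
      (l₁ := l₁) (l₂ := l₂ ++ [ρ]) ?_
    rw [e]
    simp
  obtain ⟨τ₀, R, hτ₀⟩ : ∃ τ₀ R, K ++ [μ] = τ₀ :: R := List.exists_cons_of_ne_nil (by simp)
  have hτ₀w : τ₀ w = h := by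
    have hστ₀ : AtMostOneChange σ τ₀ := hrel hL (l₁ := []) (by rw [hτ₀]; rfl)
    rw [← hp.nbhd_in w hw, hστ₀ v (by rw [hp.color_mid τ₀ (by simp [hτ₀])]; exact hp.move_in) w
      (hG.ne_of_uAdj hw).symm]
  obtain ⟨E, x, F, y, y', E', hE, hxw, hF, hy, hy'⟩ := exists_excursion (· w) (c := h)
    (l := K ++ [μ]) (by simp [hτ₀, hτ₀w]) (by simpa using hp.nbhd_out w hw) hnc
  obtain ⟨x', F', hF'⟩ : ∃ x' F', F ++ [y] = x' :: F' := List.exists_cons_of_ne_nil (by simp)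
  -- `v` is a neighbor of `w` and keeps the color `μ v` during the excursion of `w`.
  have hnbhd : ∀ {a b : V → X} {l₁ l₂ : List (V → X)}, σ :: (K ++ [μ]) = l₁ ++ a :: b :: l₂ →
      a ∈ K ++ [μ] → a w ≠ b w → ∀ z, G.UAdj w z → a z = μ v := by
    intro a b l₁ l₂ e ha hab
    obtain ⟨c, hc⟩ := hrel hm e w hab
    exact fun z hz => (hc z hz).trans ((hc v hw.symm).symm.trans (hp.color_mid a ha))
  have hx'w : x' w = y w := hF x' (by simp [hF'])
  refine ⟨μ v, x, F, y, y', ⟨?_, by rwa [hxw, ne_comm], fun τ hτ => hF τ (by simp [hτ]), hy',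
    hnbhd (b := x') (l₁ := σ :: E) (l₂ := F' ++ y' :: E') (by rw [hE, hF']; simp) (by simp [hE])
      (by rw [hxw, hx'w]; exact hy.symm),
    hnbhd (b := y') (l₁ := σ :: E ++ x :: F) (l₂ := E') (by rw [hE]; simp) (by simp [hE]) hy'⟩, ?_⟩
  · refine List.IsInfix.trans ⟨σ :: E, E' ++ [ρ], ?_⟩ hp.isInfix
    rw [show K ++ [μ, ρ] = K ++ [μ] ++ [ρ] by simp, hE]
    simp
  · have := congrArg List.length hE
    simp only [List.length_append, List.length_cons, List.length_nil] at this
    omega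

theorem IsCancellingPair.exists_quiet (hG : G.Loopless) (hL : L.IsChain AtMostOneChange)
    (hm : L.IsChain (MonoStep G)) (hp : IsCancellingPair G L v h σ K μ ρ) :
    ∃ v h σ K μ ρ, IsCancellingPair G L v h σ K μ ρ ∧
      ∀ w, G.UAdj v w → ∀ τ ∈ K ++ [μ], τ w = h := by
  induction hK : K.length using Nat.strong_induction_on generalizing v h σ K μ ρ with
  | _ n ih =>
    by_cases hquiet : ∀ w, G.UAdj v w → ∀ τ ∈ K ++ [μ], τ w = h
    · exact ⟨v, h, σ, K, μ, ρ, hp, hquiet⟩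
    push Not at hquiet
    obtain ⟨w, hw, τ, hτ, hne⟩ := hquiet
    obtain ⟨h', σ', K', μ', ρ', hp', hlt⟩ := hp.exists_shorter hG hL hm hw ⟨τ, hτ, hne⟩
    exact ih _ (hK ▸ hlt) hp' rfl

end CancellingPairs

section Surgery

variable {V X : Type} {G : Dgraph V} {H : Dgraph X}

theorem IsHom.update_of_nbhd [DecidableEq V] (hG : G.Loopless) {σ τ : V → X}
    (hσ : IsHom G.usym H.usym σ) (hτ : IsHom G.usym H.usym τ) {v : V}
    (hnb : ∀ w, G.UAdj v w → σ w = τ w) : IsHom G.usym H.usym (Function.update τ v (σ v)) := by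
  intro x y hxy
  have hagree : ∀ z, z = v ∨ G.UAdj v z → Function.update τ v (σ v) z = σ z := by
    rintro z (rfl | hz)
    · simp
    · rw [Function.update_of_ne (hG.ne_of_uAdj hz).symm, hnb z hz]
  by_cases hx : x = v
  · subst hx
    rw [hagree x (Or.inl rfl), hagree y (Or.inr hxy)]
    exact hσ hxy
  by_cases hy : y = v
  · subst hy
    rw [hagree x (Or.inr (show G.UAdj y x from Or.symm hxy)), hagree y (Or.inl rfl)]
    exact hσ hxy
  rw [Function.update_of_ne hx, Function.update_of_ne hy]
  exact hτ hxy

theorem AtMostOneChange.update_left [DecidableEq V] {μ ρ : V → X} (h : AtMostOneChange μ ρ)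
    {v : V} (hv : μ v ≠ ρ v) (a : X) : AtMostOneChange (Function.update μ v a) ρ := by
  intro u hu w hwu
  by_cases hwv : w = v
  · subst hwv
    rw [Function.update_of_ne (Ne.symm hwu)] at hu
    exact absurd (h w hv u (Ne.symm hwu)) hu
  · rw [Function.update_of_ne hwv]
    exact h v hv w hwv

theorem MonoStep.update_left [DecidableEq V] (hG : G.Loopless) {μ ρ : V → X}
    (h : AtMostOneChange μ ρ) {v : V} (hv : μ v ≠ ρ v) {c : X} (hnb : ∀ w, G.UAdj v w → μ w = c)
    (a : X) : MonoStep G (Function.update μ v a) ρ := by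
  intro u hu
  obtain rfl : u = v := by
    by_contra huv
    rw [Function.update_of_ne huv] at hu
    exact hu (h v hv u huv)
  exact ⟨c, fun w hw => by rw [Function.update_of_ne (hG.ne_of_uAdj hw).symm, hnb w hw]⟩

variable [DecidableEq V] {L : List (V → X)} {v : V} {h : X} {σ μ ρ : V → X} {K : List (V → X)}

theorem IsCancellingPair.head_update (hL : L.IsChain AtMostOneChange)
    (hp : IsCancellingPair G L v h σ K μ ρ) :
    ((K ++ [μ]).map (fun τ => Function.update τ v (σ v)) ++ [ρ]).head? = some σ := by
  obtain ⟨τ₀, R, hτ₀⟩ : ∃ τ₀ R, K ++ [μ] = τ₀ :: R := List.exists_cons_of_ne_nil (by simp)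
  have hστ₀ : AtMostOneChange σ τ₀ := by
    have := hp.isChain hL
    rw [hτ₀] at this
    exact (List.isChain_cons_cons.1 this).1
  have hmove : σ v ≠ τ₀ v := by
    rw [hp.color_mid τ₀ (by simp [hτ₀])]
    exact hp.move_in
  rw [hτ₀, List.map_cons, List.cons_append, List.head?_cons, Option.some.injEq]
  funext w
  rcases eq_or_ne w v with rfl | hwv
  · simp
  · rw [Function.update_of_ne hwv, hστ₀ v hmove w hwv]

/-- The vertex walk of `v` itself loses the backtracking `(h, μ v)(μ v, h)`. -/
theorem IsCancellingPair.vwalk_surgery_self (hG : G.Loopless)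
    (hp : IsCancellingPair G L v h σ K μ ρ) (hv : ∃ w, G.UAdj v w) {S : List X}
    (hS : VWalk G v (σ :: (K ++ [μ, ρ])) S) :
    ∃ S', VWalk G v ((K ++ [μ]).map (fun τ => Function.update τ v (σ v)) ++ [ρ]) S' ∧
      PiEq S S' := by
  obtain ⟨τ₀, R, hτ₀⟩ : ∃ τ₀ R, K ++ [μ] = τ₀ :: R := List.exists_cons_of_ne_nil (by simp)
  have hKμ : K ++ [μ, ρ] = K ++ [μ] ++ [ρ] := by simp
  have hold : VWalk G v (σ :: (K ++ [μ, ρ])) [σ v, h, μ v, h, ρ v] := by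
    rw [vwalk_cons_iff (σ' := τ₀) (by simp [hKμ, hτ₀])]
    refine Or.inr ⟨by rw [hp.color_mid τ₀ (by simp [hτ₀])]; exact hp.move_in, h, _,
      hp.nbhd_in, ?_, rfl⟩
    rw [hKμ, vwalk_append_iff_of_forall_eq (μ := μ) hp.color_mid (by simp)]
    exact VWalk.move h hp.move_out hp.nbhd_out (VWalk.single ρ)
  rw [hS.unique hv hold]
  have hmid : ∀ τ ∈ (K ++ [μ]).map (fun τ => Function.update τ v (σ v)), τ v = σ v := by
    intro τ hτ
    obtain ⟨τ', -, rfl⟩ := List.mem_map.1 hτ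
    simp
  simp_rw [vwalk_append_iff_of_forall_eq hmid (by simp : _ = some (Function.update μ v (σ v)))]
  have hcancel : RStep [σ v, h, μ v, h, ρ v] [σ v, h, ρ v] :=
    Or.inl ⟨[σ v], [ρ v], h, μ v, rfl, rfl⟩
  by_cases hσρ : σ v = ρ v
  · refine ⟨[ρ v], VWalk.stay (by simpa using hσρ) (VWalk.single ρ),
      (PiEq.of_rstep hcancel).trans (PiEq.of_rstep ?_)⟩
    exact Or.inl ⟨[], [], σ v, h, by simp [hσρ], by simp [hσρ]⟩
  · refine ⟨[σ v, h, ρ v], ?_, PiEq.of_rstep hcancel⟩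
    simpa using VWalk.move (σ := Function.update μ v (σ v)) (σ' := ρ) h (by simpa using hσρ)
      (fun w hw => by rw [Function.update_of_ne (hG.ne_of_uAdj hw).symm, hp.nbhd_out w hw])
      (VWalk.single (G := G) (v := v) ρ)

theorem IsCancellingPair.vwalk_surgery (hG : G.Loopless) (hL : L.IsChain AtMostOneChange)
    (hp : IsCancellingPair G L v h σ K μ ρ) (hquiet : ∀ w, G.UAdj v w → ∀ τ ∈ K ++ [μ], τ w = h)
    (hv : ∃ w, G.UAdj v w) (q : V) {S : List X} (hS : VWalk G q (σ :: (K ++ [μ, ρ])) S) :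
    ∃ S', VWalk G q ((K ++ [μ]).map (fun τ => Function.update τ v (σ v)) ++ [ρ]) S' ∧
      PiEq S S' := by
  rcases eq_or_ne q v with rfl | hqv
  · exact hp.vwalk_surgery_self hG hv hS
  by_cases hvq : G.UAdj v q
  · have hρq : ρ q = h := ((hp.step_out hL) v hp.move_out q hqv).symm.trans
      (hquiet q hvq μ (by simp))
    have hold : ∀ τ ∈ σ :: (K ++ [μ, ρ]), τ q = h := by
      intro τ hτ
      simp only [List.mem_cons, List.mem_append, List.not_mem_nil, or_false] at hτ
      rcases hτ with rfl | hτ | rfl | rfl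
      · exact hp.nbhd_in q hvq
      · exact hquiet q hvq τ (by simp [hτ])
      · exact hquiet q hvq τ (by simp)
      · exact hρq
    have hnew : ∀ τ ∈ (K ++ [μ]).map (fun τ => Function.update τ v (σ v)) ++ [ρ], τ q = h := by
      intro τ hτ
      rcases List.mem_append.1 hτ with hτ | hτ
      · obtain ⟨τ', hτ', rfl⟩ := List.mem_map.1 hτ
        rw [Function.update_of_ne hqv]
        exact hquiet q hvq τ' hτ'
      · rw [List.mem_singleton.1 hτ, hρq]
    rw [vwalk_iff_of_forall_eq (by simp) hold] at hS
    exact ⟨[h], (vwalk_iff_of_forall_eq (by simp) hnew).2 rfl, hS ▸ PiEq.refl _⟩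
  · refine ⟨S, (vwalk_cons_iff_of_eq (hp.head_update hL) rfl).1 (hS.of_forall₂ ?_), PiEq.refl S⟩
    rw [show K ++ [μ, ρ] = K ++ [μ] ++ [ρ] by simp]
    refine .cons ⟨rfl, fun _ _ => rfl⟩
      (List.rel_append ?_ (List.forall₂_same.2 fun _ _ => ⟨rfl, fun _ _ => rfl⟩))
    rw [List.forall₂_map_right_iff, List.forall₂_same]
    intro τ _
    refine ⟨(Function.update_of_ne hqv _ _).symm, fun w hw => (Function.update_of_ne ?_ _ _).symm⟩
    rintro rfl
    exact hvq hw.symm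

end Surgery

section Backward

variable {V X : Type} {G : Dgraph V} {H : Dgraph X} {α β : V → X} {q : V} {Q : List X}

theorem IsLazyRealization.exists_shorter_of_cancellingPair (hG : G.Loopless)
    (hnbr : ∀ w : V, ∃ w', G.UAdj w w') {L : List (V → X)}
    (hR : IsLazyRealization G H α β q Q L) {v : V} {h : X} {σ μ ρ : V → X} {K : List (V → X)}
    (hp : IsCancellingPair G L v h σ K μ ρ) :
    ∃ L', IsLazyRealization G H α β q Q L' ∧ L'.length < L.length := by
  classical
  obtain ⟨v, h, σ, K, μ, ρ, hp, hquiet⟩ := hp.exists_quiet hG hR.step hR.mono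
  have hsub := hp.isInfix.subset
  have hmid : ∀ {R : (V → X) → (V → X) → Prop}, L.IsChain R → (K ++ [μ]).IsChain R :=
    fun hL => (List.isChain_append.1 (hp.isChain hL)).1.tail
  have hlast : ((K ++ [μ]).map fun τ => Function.update τ v (σ v)).getLast? =
      some (Function.update μ v (σ v)) := by simp
  have hKμρ : σ :: (K ++ [μ, ρ]) = σ :: (K ++ [μ]) ++ [ρ] := by simp
  obtain ⟨A, C, rfl⟩ := hp.isInfix
  refine ⟨_, hR.replace_infix (W' := (K ++ [μ]).map (fun τ => Function.update τ v (σ v)) ++ [ρ])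
    (by simp) (by rw [hp.head_update hR.step]; rfl)
    (by rw [hKμρ, List.getLast?_concat, List.getLast?_concat]) ?_ ?_ ?_
    (fun _ hS => hp.vwalk_surgery hG hR.step hquiet (hnbr v) q hS), by simp⟩
  · intro τ hτ
    rcases List.mem_append.1 hτ with hτ | hτ
    · obtain ⟨τ', hτ', rfl⟩ := List.mem_map.1 hτ
      refine (hR.hom σ (hsub (by simp))).update_of_nbhd hG (hR.hom τ' (hsub ?_))
        fun w hw => (hp.nbhd_in w hw).trans (hquiet w hw τ' hτ').symm
      rw [hKμρ]
      exact List.mem_append_left _ (List.mem_cons_of_mem _ hτ')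
    · rw [List.mem_singleton.1 hτ]
      exact hR.hom ρ (hsub (by simp))
  · refine List.IsChain.append ((List.isChain_map _).2 ((hmid hR.step).imp
      fun _ _ hab => hab.update v (σ v))) (List.isChain_singleton ρ) ?_
    rw [hlast]
    rintro _ ⟨⟩ _ ⟨⟩
    exact (hp.step_out hR.step).update_left hp.move_out (σ v)
  · refine List.IsChain.append ((List.isChain_map _).2 ((hmid hR.mono).imp_of_mem_imp
      fun a b ha hb hab => hab.update (σ v) fun w hw =>
        (hquiet w hw a ha).trans (hquiet w hw b hb).symm)) (List.isChain_singleton ρ) ?_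
    rw [hlast]
    rintro _ ⟨⟩ _ ⟨⟩
    exact MonoStep.update_left hG (hp.step_out hR.step) hp.move_out hp.nbhd_out (σ v)

theorem VWalk.isChain_arc {v : V} (hv : ∃ w, G.UAdj v w) {t : Bool} {L : List (V → X)}
    {S : List X} (hw : VWalk G v L S) (hS : IsZigzag H t S) :
    L.IsChain fun σ σ' => σ v ≠ σ' v → ∀ h, (∀ w, G.UAdj v w → σ w = h) → H.Arc t (σ' v) h := by
  obtain ⟨w₀, hw₀⟩ := hv
  induction hw with
  | single σ => exact List.isChain_singleton σ
  | stay hst _ ih => exact List.isChain_cons_cons.2 ⟨fun hne => absurd hst hne, ih hS⟩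
  | move h _ hnb hw ih =>
    rw [hw.eq_cons] at hS ih
    simp only [IsZigzag, Bool.not_not, Dgraph.arc_not] at hS
    refine List.isChain_cons_cons.2 ⟨fun _ h' hh' => ?_, ih hS.2.2⟩
    rw [← hh' w₀ hw₀, hnb w₀ hw₀]
    exact hS.2.1

theorem IsHom.of_step (hG : G.Loopless) {σ σ' : V → X} (hσ : IsHom G H σ)
    (hstep : AtMostOneChange σ σ') (hmono : MonoStep G σ σ')
    (harc : ∀ v, σ v ≠ σ' v → ∀ h, (∀ w, G.UAdj v w → σ w = h) →
      ∀ t, (∃ u, G.Arc t v u) → H.Arc t (σ' v) h) : IsHom G H σ' := by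
  intro x y hxy
  have hxy' : G.UAdj x y := Or.inl hxy
  by_cases hx : σ x ≠ σ' x
  · obtain ⟨h, hh⟩ := hmono x hx
    have hy : σ' y = h := (hstep x hx y (hG.ne_of_uAdj hxy').symm).symm.trans (hh y hxy')
    exact hy ▸ harc x hx h hh false ⟨y, hxy⟩
  by_cases hy : σ y ≠ σ' y
  · obtain ⟨h, hh⟩ := hmono y hy
    have hx' : σ' x = h := (hstep y hy x (hG.ne_of_uAdj hxy')).symm.trans (hh x hxy'.symm)
    exact hx' ▸ harc y hy h hh true ⟨x, hxy⟩
  rw [← not_not.1 hx, ← not_not.1 hy]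
  exact hσ hxy

theorem IsLazyRealization.mRealizable (hG : G.Loopless) (hGconn : G.WConn)
    (hnbr : ∀ w : V, ∃ w', G.UAdj w w') (hα : IsHom G H α) (hOC : OrientCompatible G H α β q Q)
    {L : List (V → X)} (hR : IsLazyRealization G H α β q Q L) (hne : L.IsChain (· ≠ ·))
    (hred : ∀ v S, VWalk G v L S → NoBacktrack S) : MRealizable G H α β q Q := by
  obtain ⟨Sq, hq, hpi⟩ := hR.walk
  have hL : L ≠ [] := by rintro rfl; exact absurd hR.head (by simp)
  have hzig : ∀ v S, VWalk G v L S → Zigzag G H v S := by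
    intro v S hS
    obtain ⟨W, hW⟩ := hGconn q v
    have hSq : Sq.head? = some (α q) := by simp [hq.head?, hR.head]
    refine hOC v W hW S ((isReduced_iff_noBacktrack S).2 (hred v S hS)) ?_
    exact ((hpi.conj α β hW.2.1 hSq (hpi.head?_eq ▸ hSq)).symm.trans
      (hq.piEq_conj hG hnbr hR.step hR.mono hR.head hR.last hW hS).symm)
  have hrel := fun {R : (V → X) → (V → X) → Prop} (h : L.IsChain R) =>
    List.isChain_iff_forall_rel_of_append_cons_cons.1 h
  have hhom : ∀ σ ∈ L, IsHom G H σ := by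
    refine List.IsChain.induction _ L (r := fun σ σ' => IsHom G H σ → IsHom G H σ') ?_
      (fun _ _ h => h) fun hL' => ?_
    · refine List.isChain_iff_forall_rel_of_append_cons_cons.2 fun σ σ' l₁ l₂ hsplit hσ => ?_
      refine hσ.of_step hG (hrel hR.step hsplit) (hrel hR.mono hsplit) ?_
      rintro v hv h hh t ⟨u, hvu⟩
      obtain ⟨S, hS⟩ := exists_vwalk (v := v) hL hR.mono
      exact hrel (hS.isChain_arc (hnbr v) (zigzag_iff.1 (hzig v S hS) t ⟨u, hvu⟩)) hsplit hv h hh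
    · rwa [(List.head_eq_iff_head?_eq_some hL').2 hR.head]
  refine ⟨L, Sq, ⟨hL, hhom, ?_⟩, hR.head, hR.last, hR.mono, hq, hpi⟩
  exact List.isChain_iff_forall_rel_of_append_cons_cons.2 fun σ σ' l₁ l₂ hsplit =>
    (hrel hR.step hsplit).existsUnique (hrel hne hsplit)

theorem IsLazyRealization.mRealizable_of_orientCompatible (hG : G.Loopless) (hH : H.Loopless)
    (hGconn : G.WConn) (hnbr : ∀ w : V, ∃ w', G.UAdj w w') (hα : IsHom G H α)
    (hOC : OrientCompatible G H α β q Q) {L : List (V → X)}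
    (hR : IsLazyRealization G H α β q Q L) : MRealizable G H α β q Q := by
  induction hn : L.length using Nat.strong_induction_on generalizing L with
  | _ n ih =>
    by_cases hstutter : ∃ A ρ C, L = A ++ [ρ, ρ] ++ C
    · obtain ⟨A, ρ, C, rfl⟩ := hstutter
      exact ih _ (by rw [← hn]; simp) hR.remove_stutter rfl
    by_cases hpair : ∃ v h σ K μ ρ, IsCancellingPair G L v h σ K μ ρ
    · obtain ⟨v, h, σ, K, μ, ρ, hp⟩ := hpair
      obtain ⟨L', hR', hlt⟩ := hR.exists_shorter_of_cancellingPair hG hnbr hp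
      exact ih _ (hn ▸ hlt) hR' rfl
    refine hR.mRealizable hG hGconn hnbr hα hOC ?_ fun v S hS => by_contra fun hS' => ?_
    · refine List.isChain_iff_forall_rel_of_append_cons_cons.2 ?_
      rintro a b l₁ l₂ rfl rfl
      exact hstutter ⟨l₁, a, l₂, by simp⟩
    · obtain ⟨w, hw⟩ := hnbr v
      exact hpair ⟨v, hS.exists_cancellingPair hH hw hG hR.hom hR.step hS'⟩

end Backward

end HRecoloring

open HRecoloring
theorem statement6_general {V X : Type}
    (G : Dgraph V) (H : Dgraph X)
    (hGll : G.Loopless) (hHll : H.Loopless)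
    (hGconn : G.WConn)
    (α β : V → X) (hα : IsHom G H α)
    (q : V) (Q : List X)
    (hbar : MRealizable G.usym H.usym α β q Q) :
    MRealizable G H α β q Q ↔ OrientCompatible G H α β q Q := by
  by_cases harc : ∃ u w, G.Adj u w
  · obtain ⟨u, w, huw⟩ := harc
    have hnbr := hGconn.exists_uAdj huw
    obtain ⟨L, hR⟩ := hbar.exists_isLazyRealization
    exact ⟨MRealizable.orientCompatible hGll hHll hnbr,
      fun hOC => hR.mRealizable_of_orientCompatible hGll hHll hGconn hnbr hα hOC⟩
  · push Not at harc
    refine iff_of_true (hbar.of_usym fun σ _ x y hxy => absurd hxy (harc x y)) ?_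
    exact fun v _ _ _ _ _ => zigzag_iff.2 fun t ⟨u, hvu⟩ => by
      cases t <;> exact absurd hvu (harc _ _)

/-- For loopless weakly connected digraphs `G, H` and a walk `Q` that is
`\bar H`-realizable for `α, β, q`, the walk `Q` is `H`-realizable iff it is
orientation compatible. -/
theorem statement6 {V X : Type} [Fintype V] [Fintype X]
    (G : Dgraph V) (H : Dgraph X)
    (hGll : G.Loopless) (hHll : H.Loopless)
    (hGconn : G.WConn) (hHconn : H.WConn)
    (α β : V → X) (hα : IsHom G H α) (hβ : IsHom G H β)
    (q : V) (Q : List X) (hQ : IsWalk H (α q) (β q) Q) (hQred : IsReduced Q)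
    (hbar : MRealizable G.usym H.usym α β q Q) :
    MRealizable G H α β q Q ↔ OrientCompatible G H α β q Q :=
  statement6_general G H hGll hHll hGconn α β hα q Q hbar
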